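/- There exists a constant c ∈ ℕ and a partial computable function B such that for every binary string x and every d ∈ ℕ with C(C(x)|x) > d + c, B(x, C(x), d) is defined and is greater than or equal to the number of steps taken by U on every program p of length at most d on which U halts. In other words, the pair (x, C(x)) solves the busy beaver problem up to length d whenever C(C(x)|x) > d + c. -/

import Mathlib

/-- Conditional plain Kolmogorov complexity of `x` given `y`, with respect to the
machine `U` (which takes a pair (conditional input, program)). -/
noncomputable def condC (U : List Bool × List Bool →. List Bool) (x y : List Bool) : ℕ :=
  sInf {k : ℕ | ∃ p : List Bool, p.length = k ∧ x ∈ U (y, p)}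

/-- Plain (unconditional) Kolmogorov complexity with respect to `U`. -/
noncomputable def plainC (U : List Bool × List Bool →. List Bool) (x : List Bool) : ℕ :=
  condC U x []

/-- `U` is a partial computable, additively optimal (universal) machine. -/
def AdditivelyOptimal (U : List Bool × List Bool →. List Bool) : Prop :=
  Partrec U ∧
    ∀ V : List Bool × List Bool →. List Bool, Partrec V →
      ∃ c : ℕ, ∀ y p x, x ∈ V (y, p) →
        ∃ q : List Bool, x ∈ U (y, q) ∧ q.length ≤ p.length + c

/-- The string of `n` zeros; `C(n)` is the complexity of this string. -/
def zeros (n : ℕ) : List Bool := List.replicate n false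

/-- A natural number viewed as a binary string (for complexities like `C(C(x)|x)`). -/
def natStr (k : ℕ) : List Bool := k.bits

/-- The `i`-th binary digit of a real number. -/
noncomputable def binDigit (α : ℝ) (i : ℕ) : Bool :=
  decide (⌊α * 2 ^ (i + 1)⌋ % 2 = 1)

/-- The string of the first `n` binary digits of a real number. -/
noncomputable def binPrefix (α : ℝ) (n : ℕ) : List Bool :=
  (List.range n).map (binDigit α)

/-- `q` is a computable nondecreasing rational sequence converging to `α ∈ [0,1]`;
this witnesses that `α` is a left c.e. real. -/
structure LeftCEApprox (α : ℝ) (q : ℕ → ℚ) : Prop where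
  nonneg : 0 ≤ α
  le_one : α ≤ 1
  comp : Computable q
  mono : Monotone q
  tendsto : Filter.Tendsto (fun n => (q n : ℝ)) Filter.atTop (nhds α)

/-- Partial recursiveness relative to an oracle `g` (relativized `Nat.Partrec`). -/
inductive OracleRecursiveIn (g : ℕ →. ℕ) : (ℕ →. ℕ) → Prop
  | oracle : OracleRecursiveIn g g
  | zero : OracleRecursiveIn g (pure 0)
  | succ : OracleRecursiveIn g ↑Nat.succ
  | left : OracleRecursiveIn g ↑fun n : ℕ => (Nat.unpair n).1
  | right : OracleRecursiveIn g ↑fun n : ℕ => (Nat.unpair n).2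
  | pair {f h : ℕ →. ℕ} : OracleRecursiveIn g f → OracleRecursiveIn g h →
      OracleRecursiveIn g fun n => Nat.pair <$> f n <*> h n
  | comp {f h : ℕ →. ℕ} : OracleRecursiveIn g f → OracleRecursiveIn g h →
      OracleRecursiveIn g fun n => h n >>= f
  | prec {f h : ℕ →. ℕ} : OracleRecursiveIn g f → OracleRecursiveIn g h →
      OracleRecursiveIn g (Nat.unpaired fun a n =>
        n.rec (f a) fun y IH => do let i ← IH; h (Nat.pair a (Nat.pair y i)))
  | rfind {f : ℕ →. ℕ} : OracleRecursiveIn g f →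
      OracleRecursiveIn g fun a => Nat.rfind fun n => (fun m => m = 0) <$> f (Nat.pair a n)

/-- The binary digit sequence of a real, as an oracle. -/
noncomputable def digitOracle (α : ℝ) : ℕ →. ℕ :=
  fun n => Part.some (cond (binDigit α n) 1 0)

open Classical in
/-- The halting problem, as a (characteristic) function on codes of programs. -/
noncomputable def haltingFun : ℕ → ℕ := fun n =>
  if ((Denumerable.ofNat Nat.Partrec.Code n).eval n).Dom then 1 else 0

/-- The halting problem is Turing reducible to the binary digit sequence of `α`. -/
def TuringComplete (α : ℝ) : Prop :=
  OracleRecursiveIn (digitOracle α) ↑haltingFun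

/-- Evaluation of a `Nat.Partrec.Code` as a machine on pairs
(conditional input, program) of binary strings. -/
def codeEval (c : Nat.Partrec.Code) : List Bool × List Bool →. List Bool :=
  fun yp => (c.eval (Encodable.encode yp)).bind fun m =>
    Part.ofOption (Encodable.decode (α := List Bool) m)


/-! Let `B(x, n)` be the first time `t` at which some program of length `n` is seen to print `x`
within `t` steps. If a program `p` of length at most `d` halts only after `B(x, C(x))`, then `C(x)`
is computable from `x` and `p`: run `p` until it halts, at time `t`, and take the least `n` such
that a program of length `n` prints `x` within `t` steps; this `n` is `C(x)`. Hence
`C(C(x)|x) ≤ d + O(1)`, so when `C(C(x)|x)` is larger, `B(x, C(x))` bounds all halting times. -/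

open Nat.Partrec (Code)
open Nat.Partrec.Code Encodable

section Complexity

variable {U : List Bool × List Bool →. List Bool} {x y p : List Bool}

theorem condC_le_length (h : x ∈ U (y, p)) : condC U x y ≤ p.length :=
  Nat.sInf_le ⟨p, rfl, h⟩

theorem exists_length_eq_condC (h : ∃ p, x ∈ U (y, p)) :
    ∃ p, p.length = condC U x y ∧ x ∈ U (y, p) := by
  obtain ⟨p, hp⟩ := h
  exact Nat.sInf_mem (s := {k | ∃ p, p.length = k ∧ x ∈ U (y, p)}) ⟨p.length, p, rfl, hp⟩

theorem AdditivelyOptimal.exists_mem (hU : AdditivelyOptimal U) (x y : List Bool) :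
    ∃ p, x ∈ U (y, p) := by
  obtain ⟨c, hc⟩ := hU.2 (fun yp => Part.some yp.2) Computable.snd
  obtain ⟨q, hq, -⟩ := hc y x x (Part.mem_some x)
  exact ⟨q, hq⟩

theorem AdditivelyOptimal.condC_le (hU : AdditivelyOptimal U)
    {V : List Bool × List Bool →. List Bool} (hV : Partrec V) :
    ∃ c, ∀ y p x, x ∈ V (y, p) → condC U x y ≤ p.length + c := by
  obtain ⟨c, hc⟩ := hU.2 V hV
  refine ⟨c, fun y p x hx => ?_⟩
  obtain ⟨q, hq, hlen⟩ := hc y p x hx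
  exact (condC_le_length hq).trans hlen

end Complexity

theorem natStr_of_ne_zero {n : ℕ} (hn : n ≠ 0) : natStr n = n.bodd :: natStr n.div2 := by
  unfold natStr
  conv_lhs => rw [← Nat.bit_bodd_div2 n]
  refine Nat.bits_append_bit _ _ fun h => ?_
  have := Nat.bit_bodd_div2 n
  rw [h] at this
  cases hb : n.bodd <;> simp_all

theorem primrec_natStr : Primrec natStr := by
  have : Primrec₂ fun (_ : Unit) n => natStr n := by
    refine Primrec.nat_strong_rec _ (g := fun _ prev =>
      if prev.length = 0 then some []
      else prev[prev.length.div2]?.map (prev.length.bodd :: ·)) ?_ fun _ n => ?_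
    · have hlen : Primrec fun z : Unit × List (List Bool) => z.2.length :=
        Primrec.list_length.comp Primrec.snd
      exact Primrec.to₂ <| Primrec.ite (Primrec.eq.comp hlen (Primrec.const 0))
        (Primrec.const _)
        (Primrec.option_map (Primrec.list_getElem?.comp Primrec.snd (Primrec.nat_div2.comp hlen))
          (Primrec.list_cons.comp (Primrec.nat_bodd.comp (hlen.comp Primrec.fst)) Primrec.snd).to₂)
    rcases eq_or_ne n 0 with rfl | hn
    · rfl
    have hlt : n.div2 < n := by
      rw [Nat.div2_val]; exact Nat.div_lt_self (Nat.pos_of_ne_zero hn) one_lt_two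
    simp [hn, List.getElem?_range hlt, natStr_of_ne_zero hn]
  exact this.comp (Primrec.const ()) Primrec.id

section Search

variable (c : Code)

def outputWithin (t : ℕ) (q : List Bool) : Option (List Bool) :=
  (evaln t c (encode (([] : List Bool), q))).bind decode

variable {c} {x q : List Bool} {t : ℕ}

theorem outputWithin_mono {t t' : ℕ} (htt' : t ≤ t') (h : outputWithin c t q = some x) :
    outputWithin c t' q = some x := by
  obtain ⟨v, hv, hx⟩ := Option.bind_eq_some_iff.mp h
  exact Option.bind_eq_some_iff.mpr ⟨v, evaln_mono htt' hv, hx⟩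

theorem encode_lt_of_outputWithin (h : outputWithin c t q = some x) : encode q < t := by
  obtain ⟨v, hv, -⟩ := Option.bind_eq_some_iff.mp h
  calc encode q ≤ Nat.pair (encode ([] : List Bool)) (encode q) := Nat.right_le_pair _ _
    _ < t := evaln_bound hv

theorem mem_codeEval_of_outputWithin (h : outputWithin c t q = some x) :
    x ∈ codeEval c ([], q) := by
  obtain ⟨v, hv, hx⟩ := Option.bind_eq_some_iff.mp h
  exact Part.mem_bind_iff.mpr ⟨v, evaln_sound hv, Part.mem_ofOption.mpr hx⟩

theorem exists_outputWithin_of_mem_codeEval (h : x ∈ codeEval c ([], q)) :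
    ∃ t, outputWithin c t q = some x := by
  obtain ⟨v, hv, hx⟩ := Part.mem_bind_iff.mp h
  obtain ⟨t, ht⟩ := evaln_complete.mp hv
  exact ⟨t, Option.bind_eq_some_iff.mpr ⟨v, ht, Part.mem_ofOption.mp hx⟩⟩

variable (c)

theorem primrec_outputWithin : Primrec₂ (outputWithin c) := by
  have : Primrec fun a : ℕ × List Bool => evaln a.1 c (encode (([] : List Bool), a.2)) :=
    primrec_evaln.comp ((Primrec.fst.pair (Primrec.const c)).pair
      (Primrec.encode.comp ((Primrec.const []).pair Primrec.snd)))
  exact Primrec.option_bind this (Primrec.decode.comp Primrec.snd).to₂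

variable {n : ℕ}

/-- Bounding the code of the program by `t` loses nothing: `evaln t` only accepts inputs
below `t` (`encode_lt_of_outputWithin`). -/
def FoundWithin (x : List Bool) (n t : ℕ) : Prop :=
  ∃ j < t, (decode (α := List Bool) j).map List.length = some n ∧
    (decode j).bind (outputWithin c t) = some x

instance : Decidable (FoundWithin c x n t) := by
  unfold FoundWithin; infer_instance

variable {c}

theorem foundWithin_iff :
    FoundWithin c x n t ↔ ∃ q : List Bool, q.length = n ∧ outputWithin c t q = some x := by
  constructor
  · rintro ⟨j, -, hlen, hx⟩
    obtain ⟨q, hq, rfl⟩ := Option.map_eq_some_iff.mp hlen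
    rw [hq, Option.bind_some] at hx
    exact ⟨q, rfl, hx⟩
  · rintro ⟨q, rfl, hx⟩
    exact ⟨encode q, encode_lt_of_outputWithin hx, by simp [encodek], by simpa [encodek]⟩

theorem FoundWithin.mono {t t' : ℕ} (h : FoundWithin c x n t) (htt' : t ≤ t') :
    FoundWithin c x n t' := by
  obtain ⟨q, hlen, hq⟩ := foundWithin_iff.mp h
  exact foundWithin_iff.mpr ⟨q, hlen, outputWithin_mono htt' hq⟩

theorem plainC_le_of_foundWithin (h : FoundWithin c x n t) : plainC (codeEval c) x ≤ n := by
  obtain ⟨q, rfl, hq⟩ := foundWithin_iff.mp h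
  exact condC_le_length (mem_codeEval_of_outputWithin hq)

theorem exists_foundWithin_plainC (h : ∃ q, x ∈ codeEval c ([], q)) :
    ∃ t, FoundWithin c x (plainC (codeEval c) x) t := by
  obtain ⟨q, hlen, hq⟩ := exists_length_eq_condC h
  obtain ⟨t, ht⟩ := exists_outputWithin_of_mem_codeEval hq
  exact ⟨t, foundWithin_iff.mpr ⟨q, hlen, ht⟩⟩

variable (c)

theorem primrecPred_foundWithin :
    PrimrecPred fun a : (List Bool × ℕ) × ℕ => FoundWithin c a.1.1 a.1.2 a.2 := by
  have hR : PrimrecRel fun (j : ℕ) (a : (List Bool × ℕ) × ℕ) =>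
      (decode (α := List Bool) j).map List.length = some a.1.2 ∧
        (decode j).bind (outputWithin c a.2) = some a.1.1 := by
    have hq : Primrec fun b : ℕ × ((List Bool × ℕ) × ℕ) => decode (α := List Bool) b.1 :=
      Primrec.decode.comp Primrec.fst
    exact PrimrecPred.and
      (Primrec.eq.comp (Primrec.option_map hq (Primrec.list_length.comp Primrec.snd).to₂)
        (Primrec.option_some.comp (Primrec.snd.comp (Primrec.fst.comp Primrec.snd))))
      (Primrec.eq.comp (Primrec.option_bind hq
          ((primrec_outputWithin c).comp (Primrec.snd.comp (Primrec.snd.comp Primrec.fst))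
            Primrec.snd).to₂)
        (Primrec.option_some.comp (Primrec.fst.comp (Primrec.fst.comp Primrec.snd))))
  exact (hR.exists_mem_list.comp (Primrec.list_range.comp Primrec.snd) .id).of_eq fun a => by
    simp [FoundWithin]

def searchTime : List Bool × ℕ × ℕ →. ℕ := fun a =>
  Nat.rfind fun t => Part.some (decide (FoundWithin c a.1 a.2.1 t))

def haltTime (p : List Bool) : Part ℕ :=
  Nat.rfind fun t => Part.some (evaln t c (encode (([] : List Bool), p))).isSome

def complexityDecoder : List Bool × List Bool →. List Bool := fun a =>
  (haltTime c a.2).bind fun t =>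
    (Nat.rfind fun n => Part.some (decide (FoundWithin c a.1 n t))).map natStr

theorem partrec_searchTime : Partrec (searchTime c) :=
  Partrec.rfind <| ((primrecPred_foundWithin c).decide.comp
    (((Primrec.fst.comp Primrec.fst).pair
      (Primrec.fst.comp (Primrec.snd.comp Primrec.fst))).pair Primrec.snd)).to_comp

theorem partrec_complexityDecoder : Partrec (complexityDecoder c) := by
  have hhalt : Partrec fun a : List Bool × List Bool => haltTime c a.2 :=
    Partrec.rfind <| (Primrec.option_isSome.comp (primrec_evaln.comp
      ((Primrec.snd.pair (Primrec.const c)).pair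
        (Primrec.encode.comp ((Primrec.const []).pair
          (Primrec.snd.comp Primrec.fst)))))).to_comp
  refine hhalt.bind (Partrec.map (Partrec.rfind ?_) (primrec_natStr.comp Primrec.snd).to_comp.to₂)
  exact ((primrecPred_foundWithin c).decide.comp
    (((Primrec.fst.comp (Primrec.fst.comp Primrec.fst)).pair Primrec.snd).pair
      (Primrec.snd.comp Primrec.fst))).to_comp

variable {c} {p : List Bool} {d : ℕ}

theorem foundWithin_of_mem_searchTime {m : ℕ} (h : m ∈ searchTime c (x, n, d)) :
    FoundWithin c x n m := by
  simpa using Nat.rfind_spec h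

theorem searchTime_dom (h : FoundWithin c x n t) : (searchTime c (x, n, d)).Dom := by
  obtain ⟨m, hm, -⟩ := Nat.rfind_min' (p := fun t => decide (FoundWithin c x n t))
    (decide_eq_true h)
  exact Part.dom_iff_mem.mpr ⟨m, hm⟩

theorem isSome_of_mem_haltTime (h : t ∈ haltTime c p) :
    (evaln t c (encode (([] : List Bool), p))).isSome := by
  simpa using Nat.rfind_spec h

theorem haltTime_dom (h : (c.eval (encode (([] : List Bool), p))).Dom) : (haltTime c p).Dom := by
  obtain ⟨k, hk⟩ := evaln_complete.mp (Part.get_mem h)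
  obtain ⟨t, ht, -⟩ := Nat.rfind_min'
    (p := fun t => (evaln t c (encode (([] : List Bool), p))).isSome) (Option.isSome_of_mem hk)
  exact Part.dom_iff_mem.mpr ⟨t, ht⟩

theorem plainC_mem_rfind_foundWithin (h : FoundWithin c x (plainC (codeEval c) x) t) :
    plainC (codeEval c) x ∈ Nat.rfind fun n => Part.some (decide (FoundWithin c x n t)) := by
  refine Nat.mem_rfind.mpr ⟨by simpa using h, fun {n} hn => ?_⟩
  have : ¬FoundWithin c x n t := fun h' => (plainC_le_of_foundWithin h').not_gt hn
  simpa using this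

theorem natStr_plainC_mem_complexityDecoder (ht : t ∈ haltTime c p)
    (h : FoundWithin c x (plainC (codeEval c) x) t) :
    natStr (plainC (codeEval c) x) ∈ complexityDecoder c (x, p) :=
  Part.mem_bind_iff.mpr ⟨t, ht, Part.mem_map natStr (plainC_mem_rfind_foundWithin h)⟩

end Search

/-- There is a constant `c` and a partial computable `B` such that whenever
`C(C(x)|x) > d + c`, `B(x, C(x), d)` is defined and bounds the number of steps taken by
the universal machine on every halting program of length at most `d` (busy beaver up to
length `d`). -/
theorem pair_with_complexity_solves_busy_beaver
    (cU : Nat.Partrec.Code) (hU : AdditivelyOptimal (codeEval cU)) :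
    ∃ (c : ℕ) (B : List Bool × ℕ × ℕ →. ℕ), Partrec B ∧
      ∀ (x : List Bool) (d : ℕ),
        d + c < condC (codeEval cU) (natStr (plainC (codeEval cU) x)) x →
          ∃ m ∈ B (x, plainC (codeEval cU) x, d),
            ∀ p : List Bool, p.length ≤ d →
              (cU.eval (Encodable.encode ((([] : List Bool), p)))).Dom →
                ∃ k ≤ m,
                  (Nat.Partrec.Code.evaln k cU
                    (Encodable.encode ((([] : List Bool), p)))).isSome := by
  obtain ⟨c, hc⟩ := hU.condC_le (partrec_complexityDecoder cU)
  refine ⟨c, searchTime cU, partrec_searchTime cU, fun x d hd => ?_⟩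
  obtain ⟨t, ht⟩ := exists_foundWithin_plainC (hU.exists_mem x [])
  obtain ⟨m, hm⟩ := Part.dom_iff_mem.mp (searchTime_dom (d := d) ht)
  refine ⟨m, hm, fun p hp hhalt => ?_⟩
  obtain ⟨s, hs⟩ := Part.dom_iff_mem.mp (haltTime_dom hhalt)
  by_cases hsm : s ≤ m
  · exact ⟨s, hsm, isSome_of_mem_haltTime hs⟩
  have hfound := (foundWithin_of_mem_searchTime hm).mono (le_of_not_ge hsm)
  have hC := hc x p _ (natStr_plainC_mem_complexityDecoder hs hfound)
  omega
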